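/- For every m > 0 there exists a constant c = c(m) ≥ 1 such that for all u, g ∈ ℝ^N: (1/c) · ‖u^m − g^m‖ ≤ (‖u‖ + ‖g‖)^{m−1} · ‖u − g‖ ≤ c · ‖u^m − g^m‖, with the convention that 0 raised to a negative real power equals 0 (relevant only when u = g = 0 and m < 1, in which case all three quantities vanish). -/

import Mathlib

/-!
Write `s = m - 1 > -1` and assume `‖g‖ ≤ ‖u‖`. Splitting
`u^m - g^m = ‖u‖^s • (u - g) + (‖u‖^s - ‖g‖^s) • g`, the upper bound
`‖u^m - g^m‖ ≲ max(‖u‖, ‖g‖)^s ‖u - g‖` reduces to the scalar inequality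
`|1 - t^s| t ≤ max 1 s · (1 - t)` on `[0, 1]` (Bernoulli's inequality for `s ≥ 1`).
Since `x ↦ x^(1/m)` inverts `x ↦ x^m`, the same bound for the exponent `1/m`, applied to
`u^m` and `g^m`, is the lower bound. Finally `max(‖u‖, ‖g‖)` and `‖u‖ + ‖g‖` agree up to a
factor `2`, so their `s`-th powers agree up to a factor `2^|s|`.
-/

noncomputable section

/-- The signed power `x^m := ‖x‖^(m-1) • x` on `ℝ^N` (Euclidean norm, `0^m := 0`). -/
def vpow {N : ℕ} (m : ℝ) (x : EuclideanSpace ℝ (Fin N)) : EuclideanSpace ℝ (Fin N) :=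
  (‖x‖ ^ (m - 1)) • x

open Real

lemma abs_one_sub_rpow_mul_le {s t : ℝ} (hs : -1 < s) (ht₀ : 0 ≤ t) (ht₁ : t ≤ 1) :
    |1 - t ^ s| * t ≤ max 1 s * (1 - t) := by
  rcases le_or_gt 0 s with hs₀ | hs₀
  · have ht_rpow : t ^ s ≤ 1 := rpow_le_one ht₀ ht₁ hs₀
    have hdiff : 1 - t ^ s ≤ max 1 s * (1 - t) := by
      rcases le_total s 1 with hs₁ | hs₁
      · have : t ≤ t ^ s := by
          simpa using rpow_le_rpow_of_exponent_ge' ht₀ ht₁ hs₀ hs₁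
        nlinarith [le_max_left 1 s]
      · have bernoulli := one_add_mul_self_le_rpow_one_add (s := t - 1) (by linarith) hs₁
        rw [add_sub_cancel] at bernoulli
        nlinarith [le_max_right 1 s]
    rw [abs_of_nonneg (sub_nonneg.2 ht_rpow)]
    nlinarith [sub_nonneg.2 ht_rpow]
  · rcases ht₀.eq_or_lt with rfl | ht_pos
    · simp [zero_rpow hs₀.ne]
    · have h_one_le : 1 ≤ t ^ s := one_le_rpow_of_pos_of_le_one_of_nonpos ht_pos ht₁ hs₀.le
      have h_mul_le : t ^ s * t ≤ 1 := by
        rw [← rpow_add_one ht_pos.ne']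
        exact rpow_le_one ht₀ ht₁ (by linarith)
      rw [abs_of_nonpos (by linarith), max_eq_left (by linarith)]
      linarith

lemma abs_rpow_sub_rpow_mul_le {s a b : ℝ} (hs : -1 < s) (hb : 0 ≤ b) (hba : b ≤ a) :
    |a ^ s - b ^ s| * b ≤ max 1 s * a ^ s * (a - b) := by
  rcases (hb.trans hba).eq_or_lt with rfl | ha
  · obtain rfl : b = 0 := le_antisymm hba hb
    simp
  obtain ⟨t, ht₀, ht₁, rfl⟩ : ∃ t, 0 ≤ t ∧ t ≤ 1 ∧ b = t * a :=
    ⟨b / a, div_nonneg hb ha.le, (div_le_one ha).2 hba, by field_simp⟩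
  have ha_rpow : 0 ≤ a ^ s := rpow_nonneg ha.le s
  calc |a ^ s - (t * a) ^ s| * (t * a) = a ^ s * a * (|1 - t ^ s| * t) := by
        rw [mul_rpow ht₀ ha.le, ← one_sub_mul, abs_mul, abs_of_nonneg ha_rpow]
        ring
    _ ≤ a ^ s * a * (max 1 s * (1 - t)) :=
        mul_le_mul_of_nonneg_left (abs_one_sub_rpow_mul_le hs ht₀ ht₁) (by positivity)
    _ = max 1 s * a ^ s * (a - t * a) := by ring

lemma rpow_le_two_rpow_abs_mul {s x y : ℝ} (hx : 0 ≤ x) (hxy : x ≤ 2 * y) (hyx : y ≤ 2 * x) :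
    x ^ s ≤ 2 ^ |s| * y ^ s := by
  rcases hx.eq_or_lt with rfl | hx
  · obtain rfl : y = 0 := by linarith
    exact le_mul_of_one_le_left (zero_rpow_nonneg s) (one_le_rpow one_le_two (abs_nonneg s))
  have hy : 0 < y := by linarith
  have hlog : |log x - log y| ≤ log 2 := by
    rw [abs_sub_le_iff, sub_le_iff_le_add, sub_le_iff_le_add, ← log_mul two_ne_zero hy.ne',
      ← log_mul two_ne_zero hx.ne']
    exact ⟨log_le_log hx hxy, log_le_log hy hyx⟩
  rw [rpow_def_of_pos hx, rpow_def_of_pos hy, rpow_def_of_pos two_pos, ← exp_add, exp_le_exp]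
  have : (log x - log y) * s ≤ log 2 * |s| :=
    (le_abs_self _).trans (by rw [abs_mul]; gcongr)
  linarith

lemma max_rpow_le_two_rpow_abs_mul_add_rpow {s a b : ℝ} (ha : 0 ≤ a) (hb : 0 ≤ b) :
    max a b ^ s ≤ 2 ^ |s| * (a + b) ^ s :=
  rpow_le_two_rpow_abs_mul (le_max_of_le_left ha)
    (by linarith [max_le_add_of_nonneg ha hb]) (by linarith [le_max_left a b, le_max_right a b])

lemma add_rpow_le_two_rpow_abs_mul_max_rpow {s a b : ℝ} (ha : 0 ≤ a) (hb : 0 ≤ b) :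
    (a + b) ^ s ≤ 2 ^ |s| * max a b ^ s :=
  rpow_le_two_rpow_abs_mul (add_nonneg ha hb)
    (by linarith [le_max_left a b, le_max_right a b]) (by linarith [max_le_add_of_nonneg ha hb])

lemma norm_vpow {N : ℕ} {m : ℝ} (hm : 0 < m) (x : EuclideanSpace ℝ (Fin N)) :
    ‖vpow m x‖ = ‖x‖ ^ m := by
  rcases eq_or_ne x 0 with rfl | hx
  · simp [vpow, zero_rpow hm.ne']
  · have hx : 0 < ‖x‖ := norm_pos_iff.2 hx
    rw [vpow, norm_smul, norm_of_nonneg (rpow_nonneg hx.le _), ← rpow_add_one hx.ne',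
      sub_add_cancel]

lemma vpow_one_div_vpow {N : ℕ} {m : ℝ} (hm : 0 < m) (x : EuclideanSpace ℝ (Fin N)) :
    vpow (1 / m) (vpow m x) = x := by
  rcases eq_or_ne x 0 with rfl | hx
  · simp [vpow]
  · have hx : 0 < ‖x‖ := norm_pos_iff.2 hx
    rw [vpow, norm_vpow hm, vpow, smul_smul, ← rpow_mul hx.le, ← rpow_add hx,
      show m * (1 / m - 1) + (m - 1) = 0 by field_simp; ring, rpow_zero, one_smul]

lemma norm_vpow_sub_vpow_le_of_norm_le {N : ℕ} {m : ℝ} (hm : 0 < m)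
    {u g : EuclideanSpace ℝ (Fin N)} (h : ‖g‖ ≤ ‖u‖) :
    ‖vpow m u - vpow m g‖ ≤ (1 + max 1 (m - 1)) * ‖u‖ ^ (m - 1) * ‖u - g‖ := by
  have hscalar := abs_rpow_sub_rpow_mul_le (s := m - 1) (by linarith) (norm_nonneg g) h
  have hdecomp : vpow m u - vpow m g
      = ‖u‖ ^ (m - 1) • (u - g) + (‖u‖ ^ (m - 1) - ‖g‖ ^ (m - 1)) • g := by
    simp only [vpow, smul_sub, sub_smul]
    abel
  have hdist : ‖u‖ - ‖g‖ ≤ ‖u - g‖ := norm_sub_norm_le u g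
  calc ‖vpow m u - vpow m g‖
      ≤ ‖u‖ ^ (m - 1) * ‖u - g‖ + |‖u‖ ^ (m - 1) - ‖g‖ ^ (m - 1)| * ‖g‖ := by
        rw [hdecomp]
        refine (norm_add_le _ _).trans_eq ?_
        rw [norm_smul, norm_smul, Real.norm_eq_abs, Real.norm_eq_abs,
          abs_of_nonneg (rpow_nonneg (norm_nonneg u) _)]
    _ ≤ ‖u‖ ^ (m - 1) * ‖u - g‖ + max 1 (m - 1) * ‖u‖ ^ (m - 1) * ‖u - g‖ :=
        add_le_add le_rfl (hscalar.trans (mul_le_mul_of_nonneg_left hdist (by positivity)))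
    _ = (1 + max 1 (m - 1)) * ‖u‖ ^ (m - 1) * ‖u - g‖ := by ring

lemma norm_vpow_sub_vpow_le {N : ℕ} {m : ℝ} (hm : 0 < m) (u g : EuclideanSpace ℝ (Fin N)) :
    ‖vpow m u - vpow m g‖ ≤ (1 + max 1 (m - 1)) * max ‖u‖ ‖g‖ ^ (m - 1) * ‖u - g‖ := by
  rcases le_total ‖g‖ ‖u‖ with h | h
  · rw [max_eq_left h]
    exact norm_vpow_sub_vpow_le_of_norm_le hm h
  · rw [max_eq_right h, norm_sub_rev, norm_sub_rev u]
    exact norm_vpow_sub_vpow_le_of_norm_le hm h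

lemma max_norm_rpow_mul_norm_sub_le {N : ℕ} {m : ℝ} (hm : 0 < m)
    (u g : EuclideanSpace ℝ (Fin N)) :
    max ‖u‖ ‖g‖ ^ (m - 1) * ‖u - g‖ ≤ (1 + max 1 (1 / m - 1)) * ‖vpow m u - vpow m g‖ := by
  have hM₀ : 0 ≤ max ‖u‖ ‖g‖ := le_max_of_le_left (norm_nonneg u)
  have hinv := norm_vpow_sub_vpow_le (one_div_pos.2 hm) (vpow m u) (vpow m g)
  rw [vpow_one_div_vpow hm, vpow_one_div_vpow hm, norm_vpow hm, norm_vpow hm,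
    ← rpow_max (norm_nonneg u) (norm_nonneg g) hm.le, ← rpow_mul hM₀,
    show m * (1 / m - 1) = -(m - 1) by field_simp; ring, rpow_neg hM₀] at hinv
  rcases hM₀.eq_or_lt with hM | hM
  · obtain ⟨rfl, rfl⟩ : u = 0 ∧ g = 0 := by
      constructor <;> rw [← norm_le_zero_iff, hM] <;> simp
    simp [vpow]
  · calc max ‖u‖ ‖g‖ ^ (m - 1) * ‖u - g‖
        ≤ max ‖u‖ ‖g‖ ^ (m - 1) *
            ((1 + max 1 (1 / m - 1)) * (max ‖u‖ ‖g‖ ^ (m - 1))⁻¹ * ‖vpow m u - vpow m g‖) := by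
          gcongr
      _ = (1 + max 1 (1 / m - 1)) * ‖vpow m u - vpow m g‖ := by
          field_simp [(rpow_pos_of_pos hM (m - 1)).ne']

theorem norm_vpow_sub_comparison_general {N : ℕ} (m : ℝ) (hm : 0 < m) :
    ∃ c : ℝ, 1 ≤ c ∧ ∀ u g : EuclideanSpace ℝ (Fin N),
      (1 / c) * ‖vpow m u - vpow m g‖ ≤ (‖u‖ + ‖g‖) ^ (m - 1) * ‖u - g‖ ∧
      (‖u‖ + ‖g‖) ^ (m - 1) * ‖u - g‖ ≤ c * ‖vpow m u - vpow m g‖ := by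
  set A := 1 + max 1 (m - 1)
  set B := 1 + max 1 (1 / m - 1)
  have hA : 2 ≤ A := by linarith [le_max_left 1 (m - 1)]
  have hB : 2 ≤ B := by linarith [le_max_left 1 (1 / m - 1)]
  have h2 : 1 ≤ (2 : ℝ) ^ |m - 1| := one_le_rpow one_le_two (abs_nonneg _)
  refine ⟨2 ^ |m - 1| * (A + B), by nlinarith, fun u g => ⟨?_, ?_⟩⟩
  · rw [one_div, inv_mul_le_iff₀ (by positivity)]
    calc ‖vpow m u - vpow m g‖
        ≤ A * max ‖u‖ ‖g‖ ^ (m - 1) * ‖u - g‖ := norm_vpow_sub_vpow_le hm u g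
      _ ≤ A * (2 ^ |m - 1| * (‖u‖ + ‖g‖) ^ (m - 1)) * ‖u - g‖ := by
        gcongr
        exact max_rpow_le_two_rpow_abs_mul_add_rpow (norm_nonneg u) (norm_nonneg g)
      _ ≤ 2 ^ |m - 1| * (A + B) * ((‖u‖ + ‖g‖) ^ (m - 1) * ‖u - g‖) := by
        have : 0 ≤ 2 ^ |m - 1| * ((‖u‖ + ‖g‖) ^ (m - 1) * ‖u - g‖) := by positivity
        nlinarith
  · calc (‖u‖ + ‖g‖) ^ (m - 1) * ‖u - g‖
        ≤ 2 ^ |m - 1| * max ‖u‖ ‖g‖ ^ (m - 1) * ‖u - g‖ := by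
          gcongr
          exact add_rpow_le_two_rpow_abs_mul_max_rpow (norm_nonneg u) (norm_nonneg g)
      _ ≤ 2 ^ |m - 1| * (B * ‖vpow m u - vpow m g‖) := by
        rw [mul_assoc]
        exact mul_le_mul_of_nonneg_left (max_norm_rpow_mul_norm_sub_le hm u g) (by positivity)
      _ ≤ 2 ^ |m - 1| * (A + B) * ‖vpow m u - vpow m g‖ := by
        have : 0 ≤ 2 ^ |m - 1| * ‖vpow m u - vpow m g‖ := by positivity
        nlinarith

/-- For every `m > 0` there is `c = c(m) ≥ 1` such that for all `u, g ∈ ℝ^N`: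
`(1/c)·‖u^m − g^m‖ ≤ (‖u‖ + ‖g‖)^(m−1)·‖u − g‖ ≤ c·‖u^m − g^m‖`
(here `0` to a negative real power is `0`, as for `Real.rpow`). -/
theorem norm_vpow_sub_comparison {N : ℕ} (hN : 1 ≤ N) (m : ℝ) (hm : 0 < m) :
    ∃ c : ℝ, 1 ≤ c ∧ ∀ u g : EuclideanSpace ℝ (Fin N),
      (1 / c) * ‖vpow m u - vpow m g‖ ≤ (‖u‖ + ‖g‖) ^ (m - 1) * ‖u - g‖ ∧
      (‖u‖ + ‖g‖) ^ (m - 1) * ‖u - g‖ ≤ c * ‖vpow m u - vpow m g‖ :=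
  norm_vpow_sub_comparison_general m hm
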